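/- Let u be a Gaussian wave packet on ℝ² with parameters (q, p, C, ζ) for some ε > 0, and let θ ∈ ℝ. Then ∫_{ℝ²} sin(x₁ + x₂ + θ) |u(x)|² dx = π ε · (det C_I)^{−1/2} · exp(−(2/ε) ζ_I − (ε/4) 𝟙ᵀ C_I⁻¹ 𝟙) · sin(q₁ + q₂ + θ), where 𝟙 = (1, 1)ᵀ ∈ ℝ². -/

import Mathlib

open MeasureTheory Matrix Complex

noncomputable section

/-- The Gaussian wave packet on `ℝ^d` with parameters `(q, p, C, ζ)` and
semiclassical parameter `ε`. -/
def gwp (d : ℕ) (ε : ℝ) (q p : Fin d → ℝ) (C : Matrix (Fin d) (Fin d) ℂ) (ζ : ℂ)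
    (x : Fin d → ℝ) : ℂ :=
  Complex.exp ((Complex.I / (ε : ℂ)) *
    ((1 / 2 : ℂ) * ((fun i => ((x i - q i : ℝ) : ℂ)) ⬝ᵥ
        C.mulVec (fun i => ((x i - q i : ℝ) : ℂ)))
      + (fun i => ((x i - q i : ℝ) : ℂ)) ⬝ᵥ (fun i => ((p i : ℝ) : ℂ)) + ζ))

/-!
The density `|u|²` is the Gaussian `exp (-(x - q)ᵀ (C_I / ε) (x - q) - 2 ζ_I / ε)`, so the sine
average is, after centring at `q`, the imaginary part of `e^{i (q₁ + q₂ + θ)}` times the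
characteristic function of a Gaussian at `𝟙`. For positive definite `A`, the substitution
`x = A^{-1/2} y` (Jacobian `(det A)^{-1/2}`) turns `∫ exp (-xᵀ A x + i ξᵀ x) dx` into a product of
one-dimensional Gaussian Fourier integrals, with value `π^{d/2} (det A)^{-1/2} exp (-ξᵀ A⁻¹ ξ / 4)`.
Taking `A = C_I / ε` and `ξ = 𝟙` gives the formula.
-/

open scoped MatrixOrder

section GaussianIntegral

variable {ι : Type*} [Fintype ι]

theorem integral_comp_mulVec [DecidableEq ι] {E : Type*} [NormedAddCommGroup E] [NormedSpace ℝ E]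
    {M : Matrix ι ι ℝ} (hM : M.det ≠ 0) (g : (ι → ℝ) → E) :
    ∫ x, g (M *ᵥ x) = |M.det|⁻¹ • ∫ x, g x := by
  have hemb : MeasurableEmbedding (toLin' M) :=
    (toLin' M).continuous_of_finiteDimensional.measurable.measurableEmbedding
      (mulVec_injective_iff_isUnit.2 ((isUnit_iff_isUnit_det M).2 hM.isUnit))
  change ∫ x, g (toLin' M x) = _
  rw [← hemb.integral_map, Real.map_matrix_volume_pi_eq_smul_volume_pi hM, integral_smul_measure,
    ENNReal.toReal_ofReal (abs_nonneg _), abs_inv]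

theorem integral_cexp_neg_dotProduct_self_add_I_mul (η : ι → ℝ) :
    ∫ y : ι → ℝ, cexp (-((y ⬝ᵥ y : ℝ) : ℂ) + I * ((η ⬝ᵥ y : ℝ) : ℂ)) =
      ((Real.pi ^ (Fintype.card ι / 2 : ℝ) : ℝ) : ℂ) * cexp (-((η ⬝ᵥ η : ℝ) : ℂ) / 4) := by
  have hexp (y : ι → ℝ) : -((y ⬝ᵥ y : ℝ) : ℂ) + I * ((η ⬝ᵥ y : ℝ) : ℂ) =
      -1 * ∑ i, (y i : ℂ) ^ 2 + ∑ i, I * η i * y i := by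
    simp only [neg_one_mul, dotProduct, ofReal_sum, ofReal_mul, Finset.mul_sum, sq, mul_assoc,
      Finset.sum_neg_distrib]
  simp_rw [hexp, GaussianFourier.integral_cexp_neg_mul_sum_add (b := 1) (by simp),
    ofReal_cpow Real.pi_pos.le, mul_pow, I_sq, dotProduct, ofReal_sum, ofReal_mul]
  push_cast
  simp [Finset.sum_neg_distrib, sq]

theorem integral_cexp_neg_dotProduct_mulVec_add_I_mul [DecidableEq ι] {A : Matrix ι ι ℝ} (hA : A.PosDef)
    (ξ : ι → ℝ) :
    ∫ x : ι → ℝ, cexp (-((x ⬝ᵥ A *ᵥ x : ℝ) : ℂ) + I * ((ξ ⬝ᵥ x : ℝ) : ℂ)) =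
      ((Real.pi ^ (Fintype.card ι / 2 : ℝ) / √A.det : ℝ) : ℂ) *
        cexp (-((ξ ⬝ᵥ A⁻¹ *ᵥ ξ : ℝ) : ℂ) / 4) := by
  have hsqrt : 0 < √A.det := Real.sqrt_pos.2 hA.det_pos
  set S := CFC.sqrt A
  set T := S⁻¹
  have hS : S * S = A := CFC.sqrt_mul_sqrt_self A hA.posSemidef.nonneg
  have hSdet : S.det = √A.det := by simpa using hA.posSemidef.det_sqrt
  have hSunit : IsUnit S.det := isUnit_iff_ne_zero.2 (hSdet ▸ hsqrt.ne')
  have hST : S * T = 1 := mul_nonsing_inv S hSunit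
  have hTS : T * S = 1 := nonsing_inv_mul S hSunit
  have hTsymm : Tᵀ = T := by
    rw [transpose_nonsing_inv, ← conjTranspose_eq_transpose_of_trivial,
      (CFC.sqrt_nonneg A).posSemidef.isHermitian.eq]
  have hTdet : T.det = (√A.det)⁻¹ := by rw [det_nonsing_inv, hSdet, Ring.inverse_eq_inv']
  have hTAT : T * A * T = 1 := by
    rw [← hS, ← mul_assoc, hTS, one_mul, hST]
  have hTT : T * T = A⁻¹ := by rw [← hS, Matrix.mul_inv_rev]
  have hquad (y : ι → ℝ) : T *ᵥ y ⬝ᵥ A *ᵥ (T *ᵥ y) = y ⬝ᵥ y := by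
    rw [mulVec_mulVec, dotProduct_mulVec, ← vecMul_transpose, vecMul_vecMul, hTsymm, ← mul_assoc,
      hTAT, vecMul_one]
  have hlin (y : ι → ℝ) : ξ ⬝ᵥ T *ᵥ y = T *ᵥ ξ ⬝ᵥ y := by
    rw [dotProduct_mulVec, ← mulVec_transpose, hTsymm]
  have hinv : T *ᵥ ξ ⬝ᵥ T *ᵥ ξ = ξ ⬝ᵥ A⁻¹ *ᵥ ξ := by
    rw [← hlin, mulVec_mulVec, hTT]
  have hchange := integral_comp_mulVec (hTdet ▸ inv_ne_zero hsqrt.ne')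
    (fun x : ι → ℝ => cexp (-((x ⬝ᵥ A *ᵥ x : ℝ) : ℂ) + I * ((ξ ⬝ᵥ x : ℝ) : ℂ)))
  simp only [hquad, hlin, integral_cexp_neg_dotProduct_self_add_I_mul, hinv, hTdet] at hchange
  rw [abs_inv, inv_inv, abs_of_pos hsqrt, real_smul] at hchange
  rw [ofReal_div, div_mul_eq_mul_div, hchange, mul_div_cancel_left₀ _ (ofReal_ne_zero.2 hsqrt.ne')]

theorem integral_sin_mul_exp_neg_dotProduct_mulVec [DecidableEq ι] {A : Matrix ι ι ℝ}
    (hA : A.PosDef) (ξ q : ι → ℝ) (θ : ℝ) :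
    ∫ x : ι → ℝ, Real.sin (ξ ⬝ᵥ x + θ) * Real.exp (-((x - q) ⬝ᵥ A *ᵥ (x - q))) =
      Real.pi ^ (Fintype.card ι / 2 : ℝ) / √A.det * Real.exp (-(ξ ⬝ᵥ A⁻¹ *ᵥ ξ) / 4) *
        Real.sin (ξ ⬝ᵥ q + θ) := by
  set φ := ξ ⬝ᵥ q + θ
  set F : (ι → ℝ) → ℂ := fun x => cexp (-((x ⬝ᵥ A *ᵥ x : ℝ) : ℂ) + I * ((ξ ⬝ᵥ x : ℝ) : ℂ))
  have hF : ∫ x, F x = ((Real.pi ^ (Fintype.card ι / 2 : ℝ) / √A.det : ℝ) : ℂ) *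
      cexp (-((ξ ⬝ᵥ A⁻¹ *ᵥ ξ : ℝ) : ℂ) / 4) := integral_cexp_neg_dotProduct_mulVec_add_I_mul hA ξ
  have hFint : Integrable F := by
    refine Integrable.of_integral_ne_zero ?_
    rw [hF]
    exact mul_ne_zero (ofReal_ne_zero.2 (div_pos (by positivity) (Real.sqrt_pos.2 hA.det_pos)).ne')
      (Complex.exp_ne_zero _)
  have him (x : ι → ℝ) : Real.sin (ξ ⬝ᵥ (x + q) + θ) * Real.exp (-((x + q - q) ⬝ᵥ A *ᵥ (x + q - q)))
      = (cexp (φ * I) * F x).im := by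
    simp only [F, ← Complex.exp_add, exp_im, add_sub_cancel_right, dotProduct_add]
    simp only [add_re, add_im, neg_re, neg_im, mul_re, mul_im, ofReal_re, ofReal_im, I_re, I_im, φ]
    ring_nf
  have hφF : Integrable fun x => cexp (φ * I) * F x := hFint.const_mul _
  rw [← integral_add_right_eq_self _ q]
  simp_rw [him]
  rw [show ∫ x, (cexp (φ * I) * F x).im = (∫ x, cexp (φ * I) * F x).im from integral_im hφF,
    integral_const_mul, hF]
  rw [mul_left_comm, im_ofReal_mul, ← Complex.exp_add, exp_im]
  simp only [add_re, add_im, neg_re, neg_im, mul_re, mul_im, ofReal_re, ofReal_im, I_re, I_im,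
    div_ofNat_re, div_ofNat_im]
  ring_nf

end GaussianIntegral

theorem im_dotProduct_mulVec_ofReal {n : Type*} [Fintype n] (C : Matrix n n ℂ) (v : n → ℝ) :
    ((fun i => (v i : ℂ)) ⬝ᵥ C *ᵥ fun i => (v i : ℂ)).im = v ⬝ᵥ C.map im *ᵥ v := by
  simp [dotProduct, mulVec, im_sum, Finset.mul_sum]

theorem norm_gwp_sq {d : ℕ} (ε : ℝ) (q p : Fin d → ℝ) (C : Matrix (Fin d) (Fin d) ℂ) (ζ : ℂ)
    (x : Fin d → ℝ) :
    ‖gwp d ε q p C ζ x‖ ^ 2 =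
      Real.exp (-(1 / ε) * ((x - q) ⬝ᵥ C.map im *ᵥ (x - q)) - (2 / ε) * ζ.im) := by
  have hv := im_dotProduct_mulVec_ofReal C (x - q)
  have hp : ((fun i => ((x i - q i : ℝ) : ℂ)) ⬝ᵥ fun i => ((p i : ℝ) : ℂ)).im = 0 := by
    simp [dotProduct, im_sum]
  simp only [Pi.sub_apply] at hv
  rw [gwp, norm_exp, sq, ← Real.exp_add]
  congr 1
  rw [div_eq_mul_inv, ← ofReal_inv, mul_comm I, mul_assoc, re_ofReal_mul, I_mul_re,
    show (1 / 2 : ℂ) = ((1 / 2 : ℝ) : ℂ) by push_cast; rfl]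
  simp only [add_im, im_ofReal_mul, hv, hp]
  ring

theorem gwp_sine_average_2d_general
    (ε : ℝ) (hε : 0 < ε) (q p : Fin 2 → ℝ)
    (C : Matrix (Fin 2) (Fin 2) ℂ) (ζ : ℂ)
    (hCIpos : (C.map Complex.im).PosDef)
    (θ : ℝ) :
    ∫ x : Fin 2 → ℝ, Real.sin (x 0 + x 1 + θ) * ‖gwp 2 ε q p C ζ x‖ ^ 2
      = Real.pi * ε * ((C.map Complex.im).det) ^ (-(1 / 2 : ℝ))
          * Real.exp (-(2 / ε) * ζ.im
              - (ε / 4) * ((fun _ : Fin 2 => (1 : ℝ)) ⬝ᵥ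
                  ((C.map Complex.im)⁻¹.mulVec fun _ : Fin 2 => (1 : ℝ))))
          * Real.sin (q 0 + q 1 + θ) := by
  set A := C.map Complex.im
  set ones : Fin 2 → ℝ := fun _ => 1
  have hones (v : Fin 2 → ℝ) : ones ⬝ᵥ v = v 0 + v 1 := by
    simp [ones, dotProduct, Fin.sum_univ_two]
  have hdet : 0 < A.det := hCIpos.det_pos
  have hinv : (ε⁻¹ • A)⁻¹ = ε • A⁻¹ := by
    simpa [Units.smul_def] using inv_smul' A (Units.mk0 ε⁻¹ (inv_ne_zero hε.ne')) hdet.ne'.isUnit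
  have hsqrt : √(ε⁻¹ • A).det = ε⁻¹ * √A.det := by
    rw [det_smul, Fintype.card_fin, Real.sqrt_mul (by positivity), Real.sqrt_sq (by positivity)]
  have hintegrand (x : Fin 2 → ℝ) : Real.sin (x 0 + x 1 + θ) * ‖gwp 2 ε q p C ζ x‖ ^ 2 =
      Real.sin (ones ⬝ᵥ x + θ) * Real.exp (-((x - q) ⬝ᵥ (ε⁻¹ • A) *ᵥ (x - q))) *
        Real.exp (-(2 / ε) * ζ.im) := by
    rw [norm_gwp_sq, sub_eq_add_neg, Real.exp_add, smul_mulVec, dotProduct_smul, smul_eq_mul,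
      hones]
    simp only [A]
    ring_nf
  simp_rw [hintegrand, integral_mul_const,
    integral_sin_mul_exp_neg_dotProduct_mulVec (hCIpos.smul (inv_pos.2 hε)), hinv, hsqrt,
    smul_mulVec, dotProduct_smul, smul_eq_mul, Fintype.card_fin]
  rw [sub_eq_add_neg, Real.exp_add, Real.rpow_neg hdet.le, ← Real.sqrt_eq_rpow]
  norm_num only [hones, Real.rpow_one]
  field_simp

/-- Explicit trigonometric Gaussian average in dimension two:
`∫ sin(x₁+x₂+θ)|u|² dx
  = πε (det C_I)^{-1/2} exp(−(2/ε)ζ_I − (ε/4) 𝟙ᵀ C_I⁻¹ 𝟙) sin(q₁+q₂+θ)`. -/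
theorem gwp_sine_average_2d
    (ε : ℝ) (hε : 0 < ε) (q p : Fin 2 → ℝ)
    (C : Matrix (Fin 2) (Fin 2) ℂ) (ζ : ℂ)
    (hCsymm : Cᵀ = C)
    (hCIpos : (C.map Complex.im).PosDef)
    (θ : ℝ) :
    ∫ x : Fin 2 → ℝ, Real.sin (x 0 + x 1 + θ) * ‖gwp 2 ε q p C ζ x‖ ^ 2
      = Real.pi * ε * ((C.map Complex.im).det) ^ (-(1 / 2 : ℝ))
          * Real.exp (-(2 / ε) * ζ.im
              - (ε / 4) * ((fun _ : Fin 2 => (1 : ℝ)) ⬝ᵥ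
                  ((C.map Complex.im)⁻¹.mulVec fun _ : Fin 2 => (1 : ℝ))))
          * Real.sin (q 0 + q 1 + θ) :=
  gwp_sine_average_2d_general ε hε q p C ζ hCIpos θ
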